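/- arXiv:2012.13951 — 4 statements merged into one kernel-verified Lean document; each statement's English description precedes it below -/
import Mathlib

section
/- Let Ψ⁺ and Ψ⁻ be polynomials in three variables of degree at most n−1, let h satisfy ∫₀^{2π} h(cos s, sin s) ds = 0, and set I_h(θ) = ∫₀^θ h(cos s, sin s) ds. Define ψ_n(r, z₀) = r[∫₀^π Ψ⁺(r cos θ, r sin θ, z₀ + I_h(θ)) dθ + ∫_π^{2π} Ψ⁻(r cos θ, r sin θ, z₀ + I_h(θ)) dθ]. Then there exist real constants C_{ij} (for 0 ≤ i + j ≤ n−1), depending only on the coefficients of Ψ± and on h, such that ψ_n(r, z₀) = r · Σ_{0 ≤ i+j ≤ n−1} C_{ij} r^i z₀^j for all r > 0 and z₀ ∈ ℝ. -/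
open Real MvPolynomial

private lemma integral_poly_eval (n : ℕ) (hn : 1 ≤ n)
    (Ψ : MvPolynomial (Fin 3) ℝ) (hΨ : Ψ.totalDegree ≤ n - 1)
    (Ih : ℝ → ℝ) (hIh : Continuous Ih) (a b : ℝ) :
    ∃ D : ℕ → ℕ → ℝ, ∀ r z₀ : ℝ,
      (∫ θ in a..b, eval ![r * Real.cos θ, r * Real.sin θ, z₀ + Ih θ] Ψ)
      = ∑ i ∈ Finset.range n, ∑ j ∈ Finset.range (n - i),
          D i j * r ^ i * z₀ ^ j := by
  refine ⟨fun i j => ∑ m ∈ Ψ.support,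
      if m 0 + m 1 = i ∧ j ≤ m 2 then
        Ψ.coeff m * ((m 2).choose j : ℝ) *
          ∫ θ in a..b, Real.cos θ ^ m 0 * Real.sin θ ^ m 1 * Ih θ ^ (m 2 - j)
      else 0, ?_⟩
  intro r z₀
  -- continuity of basic integrands
  have hcont : ∀ (p q s : ℕ), Continuous fun θ : ℝ =>
      Real.cos θ ^ p * Real.sin θ ^ q * Ih θ ^ s := by
    intro p q s
    exact ((Real.continuous_cos.pow p).mul (Real.continuous_sin.pow q)).mul (hIh.pow s)
  -- expand eval pointwise
  have heval : ∀ θ : ℝ,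
      eval ![r * Real.cos θ, r * Real.sin θ, z₀ + Ih θ] Ψ
      = ∑ m ∈ Ψ.support, ∑ k ∈ Finset.range (m 2 + 1),
          (Ψ.coeff m * ((m 2).choose k : ℝ) * r ^ (m 0 + m 1) * z₀ ^ k) *
            (Real.cos θ ^ m 0 * Real.sin θ ^ m 1 * Ih θ ^ (m 2 - k)) := by
    intro θ
    rw [eval_eq']
    refine Finset.sum_congr rfl fun m _ => ?_
    rw [Fin.prod_univ_three]
    simp only [Matrix.cons_val_zero, Matrix.cons_val_one, Matrix.head_cons,
      Matrix.cons_val_two, Matrix.tail_cons]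
    rw [add_pow, Finset.mul_sum, Finset.mul_sum]
    refine Finset.sum_congr rfl fun k _ => ?_
    rw [mul_pow, mul_pow]
    ring
  -- integrate term by term
  have key : (∫ θ in a..b, eval ![r * Real.cos θ, r * Real.sin θ, z₀ + Ih θ] Ψ)
      = ∑ m ∈ Ψ.support, ∑ k ∈ Finset.range (m 2 + 1),
          (Ψ.coeff m * ((m 2).choose k : ℝ) * r ^ (m 0 + m 1) * z₀ ^ k) *
            ∫ θ in a..b, Real.cos θ ^ m 0 * Real.sin θ ^ m 1 * Ih θ ^ (m 2 - k) := by
    simp_rw [heval]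
    rw [intervalIntegral.integral_finset_sum]
    · refine Finset.sum_congr rfl fun m _ => ?_
      rw [intervalIntegral.integral_finset_sum]
      · exact Finset.sum_congr rfl fun k _ =>
          intervalIntegral.integral_const_mul _ _
      · intro k _
        exact ((continuous_const.mul (hcont _ _ _)).intervalIntegrable a b)
    · intro m _
      refine (Continuous.intervalIntegrable ?_ a b)
      exact continuous_finset_sum _ fun k _ => continuous_const.mul (hcont _ _ _)
  rw [key]
  -- rearrange the right-hand side
  have hrhs : ∀ i j : ℕ,
      (∑ m ∈ Ψ.support,
        if m 0 + m 1 = i ∧ j ≤ m 2 then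
          Ψ.coeff m * ((m 2).choose j : ℝ) *
            ∫ θ in a..b, Real.cos θ ^ m 0 * Real.sin θ ^ m 1 * Ih θ ^ (m 2 - j)
        else 0) * r ^ i * z₀ ^ j
      = ∑ m ∈ Ψ.support,
          (if m 0 + m 1 = i ∧ j ≤ m 2 then
            (Ψ.coeff m * ((m 2).choose j : ℝ) *
              ∫ θ in a..b, Real.cos θ ^ m 0 * Real.sin θ ^ m 1 * Ih θ ^ (m 2 - j))
              * r ^ i * z₀ ^ j
          else 0) := by
    intro i j
    rw [Finset.sum_mul, Finset.sum_mul]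
    refine Finset.sum_congr rfl fun m _ => ?_
    split_ifs <;> simp
  simp_rw [hrhs]
  have swap :
      (∑ i ∈ Finset.range n, ∑ j ∈ Finset.range (n - i), ∑ m ∈ Ψ.support,
        (if m 0 + m 1 = i ∧ j ≤ m 2 then
          (Ψ.coeff m * ((m 2).choose j : ℝ) *
            ∫ θ in a..b, Real.cos θ ^ m 0 * Real.sin θ ^ m 1 * Ih θ ^ (m 2 - j))
            * r ^ i * z₀ ^ j
        else 0))
      = ∑ m ∈ Ψ.support, ∑ i ∈ Finset.range n, ∑ j ∈ Finset.range (n - i),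
        (if m 0 + m 1 = i ∧ j ≤ m 2 then
          (Ψ.coeff m * ((m 2).choose j : ℝ) *
            ∫ θ in a..b, Real.cos θ ^ m 0 * Real.sin θ ^ m 1 * Ih θ ^ (m 2 - j))
            * r ^ i * z₀ ^ j
        else 0) := by
    rw [(Finset.sum_congr rfl fun i _ => Finset.sum_comm : _ = ∑ i ∈ Finset.range n, ∑ m ∈ Ψ.support, _)]
    exact Finset.sum_comm
  rw [swap]
  refine Finset.sum_congr rfl fun m hm => ?_
  symm
  have hdeg : m 0 + m 1 + m 2 ≤ n - 1 := by
    have h1 := le_totalDegree hm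
    have h2 : (m.sum fun _ e => e) = m 0 + m 1 + m 2 := by
      rw [Finsupp.sum_fintype _ _ (fun _ => rfl), Fin.sum_univ_three]
    omega
  have hvlt : m 0 + m 1 < n := by omega
  have hsub : m 2 + 1 ≤ n - (m 0 + m 1) := by omega
  rw [Finset.sum_eq_single (m 0 + m 1)]
  · rw [← Finset.sum_subset (Finset.range_subset_range.2 hsub)
      (fun j _ hj => by
        rw [if_neg]
        rintro ⟨-, hle⟩
        exact hj (Finset.mem_range.2 (by omega)))]
    symm
    refine Finset.sum_congr rfl fun k hk => ?_
    rw [if_pos ⟨rfl, by have := Finset.mem_range.1 hk; omega⟩]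
    ring
  · intro i _ hi
    refine Finset.sum_eq_zero fun j _ => ?_
    rw [if_neg]
    rintro ⟨hc, -⟩
    exact hi hc.symm
  · intro hmem
    exact absurd (Finset.mem_range.2 hvlt) hmem

/-- the averaged function ψₙ is r times a polynomial of degree n-1
in (r, z₀). -/
theorem averaged_function_polynomial
    (n : ℕ) (hn : 1 ≤ n)
    (Ψp Ψm : MvPolynomial (Fin 3) ℝ)
    (hΨp : Ψp.totalDegree ≤ n - 1) (hΨm : Ψm.totalDegree ≤ n - 1)
    (h : ℝ × ℝ → ℝ) (hh : Continuous h)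
    (hmean : (∫ s in (0:ℝ)..(2 * π), h (Real.cos s, Real.sin s)) = 0)
    (Ih : ℝ → ℝ)
    (hIh : ∀ θ : ℝ, Ih θ = ∫ s in (0:ℝ)..θ, h (Real.cos s, Real.sin s))
    (ψ : ℝ → ℝ → ℝ)
    (hψ : ∀ r z₀ : ℝ, ψ r z₀ =
      r * ((∫ θ in (0:ℝ)..π,
              eval ![r * Real.cos θ, r * Real.sin θ, z₀ + Ih θ] Ψp) +
           (∫ θ in π..(2 * π),
              eval ![r * Real.cos θ, r * Real.sin θ, z₀ + Ih θ] Ψm))) :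
    ∃ C : ℕ → ℕ → ℝ, ∀ r z₀ : ℝ, 0 < r →
      ψ r z₀ = r * ∑ i ∈ Finset.range n, ∑ j ∈ Finset.range (n - i),
        C i j * r ^ i * z₀ ^ j := by
  have hIhc : Continuous Ih := by
    have : Continuous fun θ : ℝ => ∫ s in (0:ℝ)..θ, h (Real.cos s, Real.sin s) :=
      intervalIntegral.continuous_primitive
        (fun a b => ((hh.comp (Real.continuous_cos.prodMk Real.continuous_sin)).intervalIntegrable a b)) 0
    exact this.congr fun θ => (hIh θ).symm
  obtain ⟨Dp, hDp⟩ := integral_poly_eval n hn Ψp hΨp Ih hIhc 0 π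
  obtain ⟨Dm, hDm⟩ := integral_poly_eval n hn Ψm hΨm Ih hIhc π (2 * π)
  refine ⟨fun i j => Dp i j + Dm i j, fun r z₀ _ => ?_⟩
  rw [hψ, hDp, hDm, ← Finset.sum_add_distrib]
  congr 1
  refine Finset.sum_congr rfl fun i _ => ?_
  rw [← Finset.sum_add_distrib]
  refine Finset.sum_congr rfl fun j _ => ?_
  ring
end

section
/- Let Ψ±(x,y,z) = a±₀₀₀ + a±₁₀₀ x + a±₀₁₀ y + a±₀₀₁ z be affine functions, let h satisfy ∫₀^{2π} h(cos s, sin s) ds = 0, I_h(θ) = ∫₀^θ h(cos s, sin s) ds, c⁰₁₀ = ∫₀^π I_h(θ) dθ and c⁰₀₁ = ∫_π^{2π} I_h(θ) dθ. Then ψ₂(r, z) = r[∫₀^π Ψ⁺(r cos θ, r sin θ, z + I_h(θ)) dθ + ∫_π^{2π} Ψ⁻(r cos θ, r sin θ, z + I_h(θ)) dθ] equals r[C₁₀ r + C₀₁ z + C₀₀], where C₁₀ = 2(a⁺₀₁₀ − a⁻₀₁₀), C₀₁ = π(a⁺₀₀₁ + a⁻₀₀₁), and C₀₀ = π(a⁺₀₀₀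 + a⁻₀₀₀) + c⁰₁₀ a⁺₀₀₁ + c⁰₀₁ a⁻₀₀₁. -/
open Real intervalIntegral MeasureTheory

lemma integral_const_add_cos_add_sin (c a b A B : ℝ) :
    ∫ θ in A..B, (c + a * cos θ + b * sin θ)
      = c * (B - A) + a * (sin B - sin A) + b * (cos A - cos B) := by
  have hderiv : ∀ θ ∈ Set.uIcc A B,
      HasDerivAt (fun θ => c * θ + a * sin θ - b * cos θ) (c + a * cos θ + b * sin θ) θ := by
    intro θ _
    exact ((((hasDerivAt_id θ).const_mul c).add ((hasDerivAt_sin θ).const_mul a)).sub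
      ((hasDerivAt_cos θ).const_mul b)).congr_deriv (by ring)
  rw [integral_eq_sub_of_hasDerivAt hderiv (Continuous.intervalIntegrable (by fun_prop) _ _)]
  ring

lemma integral_affine_comp_polar (a₀ a₁ a₂ a₃ r z A B : ℝ) {f : ℝ → ℝ}
    (hf : IntervalIntegrable f volume A B) :
    ∫ θ in A..B, (a₀ + a₁ * (r * cos θ) + a₂ * (r * sin θ) + a₃ * (z + f θ))
      = (a₀ + a₃ * z) * (B - A) + a₁ * r * (sin B - sin A) + a₂ * r * (cos A - cos B)
        + a₃ * ∫ θ in A..B, f θ := by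
  have hsplit : (fun θ => a₀ + a₁ * (r * cos θ) + a₂ * (r * sin θ) + a₃ * (z + f θ))
      = fun θ => ((a₀ + a₃ * z) + a₁ * r * cos θ + a₂ * r * sin θ) + a₃ * f θ := by
    funext θ; ring
  rw [hsplit, integral_add (by apply Continuous.intervalIntegrable; fun_prop) (hf.const_mul a₃),
    integral_const_add_cos_add_sin, intervalIntegral.integral_const_mul]

theorem averaged_function_affine_general
    (ap000 ap100 ap010 ap001 am000 am100 am010 am001 : ℝ)
    (Ψp Ψm : ℝ → ℝ → ℝ → ℝ)
    (hΨp : ∀ x y z : ℝ, Ψp x y z = ap000 + ap100 * x + ap010 * y + ap001 * z)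
    (hΨm : ∀ x y z : ℝ, Ψm x y z = am000 + am100 * x + am010 * y + am001 * z)
    (h : ℝ × ℝ → ℝ) (hh : Continuous h)
    (Ih : ℝ → ℝ)
    (hIh : ∀ θ : ℝ, Ih θ = ∫ s in (0:ℝ)..θ, h (Real.cos s, Real.sin s))
    (c010 c001 : ℝ)
    (hc010 : c010 = ∫ θ in (0:ℝ)..π, Ih θ)
    (hc001 : c001 = ∫ θ in π..(2 * π), Ih θ) :
    ∀ r z : ℝ, 0 < r →
      r * ((∫ θ in (0:ℝ)..π, Ψp (r * Real.cos θ) (r * Real.sin θ) (z + Ih θ)) +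
           (∫ θ in π..(2 * π), Ψm (r * Real.cos θ) (r * Real.sin θ) (z + Ih θ)))
      = r * ((2 * (ap010 - am010)) * r + (π * (ap001 + am001)) * z +
             (π * (ap000 + am000) + c010 * ap001 + c001 * am001)) := by
  intro r z _
  have hIh_cont : Continuous Ih := by
    rw [funext hIh]
    exact continuous_primitive (fun a b => (by fun_prop : Continuous fun s =>
      h (cos s, sin s)).intervalIntegrable a b) 0
  simp only [hΨp, hΨm]
  rw [integral_affine_comp_polar _ _ _ _ _ _ _ _ (hIh_cont.intervalIntegrable _ _),
    integral_affine_comp_polar _ _ _ _ _ _ _ _ (hIh_cont.intervalIntegrable _ _),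
    ← hc010, ← hc001, sin_zero, cos_zero, sin_pi, cos_pi, sin_two_pi, cos_two_pi]
  ring

/-- explicit averaged function for a piecewise affine perturbation. -/
theorem averaged_function_affine
    (ap000 ap100 ap010 ap001 am000 am100 am010 am001 : ℝ)
    (Ψp Ψm : ℝ → ℝ → ℝ → ℝ)
    (hΨp : ∀ x y z : ℝ, Ψp x y z = ap000 + ap100 * x + ap010 * y + ap001 * z)
    (hΨm : ∀ x y z : ℝ, Ψm x y z = am000 + am100 * x + am010 * y + am001 * z)
    (h : ℝ × ℝ → ℝ) (hh : Continuous h)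
    (hmean : (∫ s in (0:ℝ)..(2 * π), h (Real.cos s, Real.sin s)) = 0)
    (Ih : ℝ → ℝ)
    (hIh : ∀ θ : ℝ, Ih θ = ∫ s in (0:ℝ)..θ, h (Real.cos s, Real.sin s))
    (c010 c001 : ℝ)
    (hc010 : c010 = ∫ θ in (0:ℝ)..π, Ih θ)
    (hc001 : c001 = ∫ θ in π..(2 * π), Ih θ) :
    ∀ r z : ℝ, 0 < r →
      r * ((∫ θ in (0:ℝ)..π, Ψp (r * Real.cos θ) (r * Real.sin θ) (z + Ih θ)) +
           (∫ θ in π..(2 * π), Ψm (r * Real.cos θ) (r * Real.sin θ) (z + Ih θ)))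
      = r * ((2 * (ap010 - am010)) * r + (π * (ap001 + am001)) * z +
             (π * (ap000 + am000) + c010 * ap001 + c001 * am001)) :=
  averaged_function_affine_general ap000 ap100 ap010 ap001 am000 am100 am010 am001 Ψp Ψm hΨp hΨm h
    hh Ih hIh c010 c001 hc010 hc001
end

section
/- Let Ψ± be polynomials of degree at most 2 in (x, y, z) with coefficients a±_{ijk} (i + j + k ≤ 2), let h satisfy ∫₀^{2π} h(cos s, sin s) ds = 0 with I_h(θ) = ∫₀^θ h(cos s, sin s) ds, and define c⁰₁₀ = ∫₀^π I_h dθ, c⁰₀₁ = ∫_π^{2π} I_h dθ, c¹₁₁ = ∫₀^π I_h cos θ dθ, c¹₁₂ = ∫_π^{2π} I_h cos θ dθ, c¹₂₁ = ∫₀^π I_h sin θ dθ, c¹₂₂ = ∫_π^{2π} I_h sin θ dθ, c²₁₀ = ∫₀^π I_h² dθ, c²₀₁ = ∫_π^{2π} I_h² dθ. Then ψ₃(r,z) = r[∫₀^π Ψ⁺(r cos θ, r sin θ, z + I_h(θ)) dθ + ∫_π^{2π} Ψ⁻(r cos θ, r sin θ, z + I_h(θ)) dθ] equals r[C₂₀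 r² + C₁₁ r z + C₀₂ z² + C₁₀ r + C₀₁ z + C₀₀], where C₂₀ = (π/2)(a⁺₂₀₀ + a⁺₀₂₀ + a⁻₂₀₀ + a⁻₀₂₀), C₁₁ = 2(a⁺₀₁₁ − a⁻₀₁₁), C₀₂ = π(a⁺₀₀₂ + a⁻₀₀₂), C₁₀ = a⁺₁₀₁ c¹₁₁ + a⁺₀₁₁ c¹₂₁ + 2(a⁺₀₁₀ − a⁻₀₁₀) + a⁻₁₀₁ c¹₁₂ + a⁻₀₁₁ c¹₂₂, C₀₁ = 2 a⁺₀₀₂ c⁰₁₀ + π a⁺₀₀₁ + 2 a⁻₀₀₂ c⁰₀₁ + π a⁻₀₀₁, and C₀₀ = a⁺₀₀₂ c²₁₀ + a⁺₀₀₁ c⁰₁₀ + π(a⁺₀₀₀ + a⁻₀₀₀) + a⁻₀₀₂ c²₀₁ + a⁻₀₀₁ c⁰₀₁. -/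
open Real intervalIntegral

private lemma combo (a b : ℝ) (g : ℝ → ℝ) (hg : Continuous g) (A B C D E F G H K L : ℝ) :
    (∫ θ in a..b, (A + B * Real.cos θ + C * Real.sin θ + D * Real.cos θ ^ 2 +
      E * Real.sin θ ^ 2 + F * (Real.sin θ * Real.cos θ) + G * g θ +
      H * (g θ * Real.cos θ) + K * (g θ * Real.sin θ) + L * g θ ^ 2))
    = A * (b - a) + B * (Real.sin b - Real.sin a) + C * (Real.cos a - Real.cos b)
      + D * ((Real.cos b * Real.sin b - Real.cos a * Real.sin a + b - a) / 2)
      + E * ((Real.sin a * Real.cos a - Real.sin b * Real.cos b + b - a) / 2)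
      + F * ((Real.sin b ^ 2 - Real.sin a ^ 2) / 2)
      + G * (∫ θ in a..b, g θ) + H * (∫ θ in a..b, g θ * Real.cos θ)
      + K * (∫ θ in a..b, g θ * Real.sin θ) + L * (∫ θ in a..b, g θ ^ 2) := by
  rw [integral_add (Continuous.intervalIntegrable (by fun_prop) _ _) (Continuous.intervalIntegrable (by fun_prop) _ _)]
  rw [integral_add (Continuous.intervalIntegrable (by fun_prop) _ _) (Continuous.intervalIntegrable (by fun_prop) _ _)]
  rw [integral_add (Continuous.intervalIntegrable (by fun_prop) _ _) (Continuous.intervalIntegrable (by fun_prop) _ _)]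
  rw [integral_add (Continuous.intervalIntegrable (by fun_prop) _ _) (Continuous.intervalIntegrable (by fun_prop) _ _)]
  rw [integral_add (Continuous.intervalIntegrable (by fun_prop) _ _) (Continuous.intervalIntegrable (by fun_prop) _ _)]
  rw [integral_add (Continuous.intervalIntegrable (by fun_prop) _ _) (Continuous.intervalIntegrable (by fun_prop) _ _)]
  rw [integral_add (Continuous.intervalIntegrable (by fun_prop) _ _) (Continuous.intervalIntegrable (by fun_prop) _ _)]
  rw [integral_add (Continuous.intervalIntegrable (by fun_prop) _ _) (Continuous.intervalIntegrable (by fun_prop) _ _)]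
  rw [integral_add (Continuous.intervalIntegrable (by fun_prop) _ _) (Continuous.intervalIntegrable (by fun_prop) _ _)]
  simp only [integral_const_mul, integral_const, smul_eq_mul,
    integral_cos, integral_sin, integral_cos_sq, integral_sin_sq, integral_sin_mul_cos₁]
  ring

/-- explicit averaged function for a piecewise quadratic
perturbation (case n = 3). -/
theorem averaged_function_quadratic
    (ap000 ap100 ap010 ap001 ap200 ap020 ap002 ap110 ap101 ap011 : ℝ)
    (am000 am100 am010 am001 am200 am020 am002 am110 am101 am011 : ℝ)
    (Ψp Ψm : ℝ → ℝ → ℝ → ℝ)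
    (hΨp : ∀ x y z : ℝ, Ψp x y z =
      ap000 + ap100 * x + ap010 * y + ap001 * z + ap200 * x ^ 2 +
        ap020 * y ^ 2 + ap002 * z ^ 2 + ap110 * x * y + ap101 * x * z +
        ap011 * y * z)
    (hΨm : ∀ x y z : ℝ, Ψm x y z =
      am000 + am100 * x + am010 * y + am001 * z + am200 * x ^ 2 +
        am020 * y ^ 2 + am002 * z ^ 2 + am110 * x * y + am101 * x * z +
        am011 * y * z)
    (h : ℝ × ℝ → ℝ) (hh : Continuous h)
    (hmean : (∫ s in (0:ℝ)..(2 * π), h (Real.cos s, Real.sin s)) = 0)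
    (Ih : ℝ → ℝ)
    (hIh : ∀ θ : ℝ, Ih θ = ∫ s in (0:ℝ)..θ, h (Real.cos s, Real.sin s))
    (c010 c001 c111 c112 c121 c122 c210 c201 : ℝ)
    (hc010 : c010 = ∫ θ in (0:ℝ)..π, Ih θ)
    (hc001 : c001 = ∫ θ in π..(2 * π), Ih θ)
    (hc111 : c111 = ∫ θ in (0:ℝ)..π, Ih θ * Real.cos θ)
    (hc112 : c112 = ∫ θ in π..(2 * π), Ih θ * Real.cos θ)
    (hc121 : c121 = ∫ θ in (0:ℝ)..π, Ih θ * Real.sin θ)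
    (hc122 : c122 = ∫ θ in π..(2 * π), Ih θ * Real.sin θ)
    (hc210 : c210 = ∫ θ in (0:ℝ)..π, (Ih θ) ^ 2)
    (hc201 : c201 = ∫ θ in π..(2 * π), (Ih θ) ^ 2) :
    ∀ r z : ℝ, 0 < r →
      r * ((∫ θ in (0:ℝ)..π, Ψp (r * Real.cos θ) (r * Real.sin θ) (z + Ih θ)) +
           (∫ θ in π..(2 * π), Ψm (r * Real.cos θ) (r * Real.sin θ) (z + Ih θ)))
      = r * ((π / 2 * (ap200 + ap020 + am200 + am020)) * r ^ 2 +
             (2 * (ap011 - am011)) * (r * z) +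
             (π * (ap002 + am002)) * z ^ 2 +
             (ap101 * c111 + ap011 * c121 + 2 * (ap010 - am010) +
               am101 * c112 + am011 * c122) * r +
             (2 * ap002 * c010 + π * ap001 + 2 * am002 * c001 + π * am001) * z +
             (ap002 * c210 + ap001 * c010 + π * (ap000 + am000) +
               am002 * c201 + am001 * c001)) := by
  intro r z _
  have hf : Continuous fun s : ℝ => h (Real.cos s, Real.sin s) := by fun_prop
  have hIhc : Continuous Ih := by
    have := intervalIntegral.continuous_primitive
      (fun a b => hf.intervalIntegrable a b : ∀ a b, IntervalIntegrable _ MeasureTheory.volume a b) 0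
    simpa [funext hIh] using this
  have key : ∀ (a000 a100 a010 a001 a200 a020 a002 a110 a101 a011 : ℝ)
      (Ψ : ℝ → ℝ → ℝ → ℝ)
      (hΨ : ∀ x y z : ℝ, Ψ x y z =
        a000 + a100 * x + a010 * y + a001 * z + a200 * x ^ 2 +
          a020 * y ^ 2 + a002 * z ^ 2 + a110 * x * y + a101 * x * z +
          a011 * y * z) (a b : ℝ),
      (∫ θ in a..b, Ψ (r * Real.cos θ) (r * Real.sin θ) (z + Ih θ))
      = (a000 + a001 * z + a002 * z ^ 2) * (b - a)
        + (a100 * r + a101 * r * z) * (Real.sin b - Real.sin a)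
        + (a010 * r + a011 * r * z) * (Real.cos a - Real.cos b)
        + (a200 * r ^ 2) * ((Real.cos b * Real.sin b - Real.cos a * Real.sin a + b - a) / 2)
        + (a020 * r ^ 2) * ((Real.sin a * Real.cos a - Real.sin b * Real.cos b + b - a) / 2)
        + (a110 * r ^ 2) * ((Real.sin b ^ 2 - Real.sin a ^ 2) / 2)
        + (a001 + 2 * a002 * z) * (∫ θ in a..b, Ih θ)
        + (a101 * r) * (∫ θ in a..b, Ih θ * Real.cos θ)
        + (a011 * r) * (∫ θ in a..b, Ih θ * Real.sin θ)
        + a002 * (∫ θ in a..b, Ih θ ^ 2) := by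
    intro a000 a100 a010 a001 a200 a020 a002 a110 a101 a011 Ψ hΨ a b
    rw [show (fun θ => Ψ (r * Real.cos θ) (r * Real.sin θ) (z + Ih θ))
        = fun θ => (a000 + a001 * z + a002 * z ^ 2)
          + (a100 * r + a101 * r * z) * Real.cos θ
          + (a010 * r + a011 * r * z) * Real.sin θ
          + (a200 * r ^ 2) * Real.cos θ ^ 2
          + (a020 * r ^ 2) * Real.sin θ ^ 2
          + (a110 * r ^ 2) * (Real.sin θ * Real.cos θ)
          + (a001 + 2 * a002 * z) * Ih θ
          + (a101 * r) * (Ih θ * Real.cos θ)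
          + (a011 * r) * (Ih θ * Real.sin θ)
          + a002 * Ih θ ^ 2 from funext fun θ => by rw [hΨ]; ring]
    exact combo a b Ih hIhc _ _ _ _ _ _ _ _ _ _
  rw [key ap000 ap100 ap010 ap001 ap200 ap020 ap002 ap110 ap101 ap011 Ψp hΨp 0 π,
      key am000 am100 am010 am001 am200 am020 am002 am110 am101 am011 Ψm hΨm π (2 * π),
      ← hc010, ← hc001, ← hc111, ← hc112, ← hc121, ← hc122, ← hc210, ← hc201]
  simp only [Real.sin_pi, Real.cos_pi, Real.sin_zero, Real.cos_zero, Real.sin_two_pi,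
    Real.cos_two_pi]
  ring
end

section
/- Suppose h : ℝ² → ℝ is continuous and ∫₀^{2π} h(cos s, sin s) ds = 0, and h(r cos θ, r sin θ) = h(cos θ, sin θ) for all r > 0. Then every solution of x' = −y, y' = x, z' = h(x, y) with initial condition (x₀, y₀, z₀) satisfying x₀² + y₀² ≠ 0 is periodic with period 2π. -/
/-!
The planar part of the system is the rotation `x' = -y, y' = x`, so every solution off the
`z`-axis is `(r cos (t + φ), r sin (t + φ))` with `r > 0`. By the homogeneity of `h`, along such
a solution `z' = h (cos (t + φ), sin (t + φ))`, a `2π`-periodic function; hence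
`z (t + 2π) - z t` is the integral of `h (cos s, sin s)` over a full period, which vanishes.
-/

open Real

theorem eq_apply_zero_of_hasDerivAt_zero {f : ℝ → ℝ} (hf : ∀ t, HasDerivAt f 0 t)
    (t : ℝ) : f t = f 0 :=
  is_const_of_deriv_eq_zero (fun u => (hf u).differentiableAt) (fun u => (hf u).deriv) t 0

theorem exists_pos_polar {a b : ℝ} (hab : a ^ 2 + b ^ 2 ≠ 0) :
    ∃ r > 0, ∃ φ, a = r * cos φ ∧ b = r * sin φ := by
  have hc : (⟨a, b⟩ : ℂ) ≠ 0 := by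
    rintro hc
    simp_all [Complex.ext_iff]
  exact ⟨_, norm_pos_iff.mpr hc, _, (Complex.norm_mul_cos_arg ⟨a, b⟩).symm,
    (Complex.norm_mul_sin_arg ⟨a, b⟩).symm⟩

section Rotation

variable {x y : ℝ → ℝ}

theorem rotation_conserved (hx : ∀ t, HasDerivAt x (-y t) t) (hy : ∀ t, HasDerivAt y (x t) t)
    (t : ℝ) :
    x t * cos t + y t * sin t = x 0 ∧ y t * cos t - x t * sin t = y 0 := by
  constructor
  · simpa using eq_apply_zero_of_hasDerivAt_zero (f := fun t => x t * cos t + y t * sin t)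
      (fun t => (((hx t).mul (hasDerivAt_cos t)).add ((hy t).mul (hasDerivAt_sin t))).congr_deriv
        (by ring)) t
  · simpa using eq_apply_zero_of_hasDerivAt_zero (f := fun t => y t * cos t - x t * sin t)
      (fun t => (((hy t).mul (hasDerivAt_cos t)).sub ((hx t).mul (hasDerivAt_sin t))).congr_deriv
        (by ring)) t

theorem rotation_eq_cos_sin (hx : ∀ t, HasDerivAt x (-y t) t) (hy : ∀ t, HasDerivAt y (x t) t)
    (t : ℝ) :
    x t = x 0 * cos t - y 0 * sin t ∧ y t = x 0 * sin t + y 0 * cos t := by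
  obtain ⟨ha, hb⟩ := rotation_conserved hx hy t
  have hsc := sin_sq_add_cos_sq t
  constructor
  · linear_combination cos t * ha - sin t * hb - x t * hsc
  · linear_combination sin t * ha + cos t * hb - y t * hsc

theorem rotation_eq_polar (hx : ∀ t, HasDerivAt x (-y t) t) (hy : ∀ t, HasDerivAt y (x t) t)
    (h0 : x 0 ^ 2 + y 0 ^ 2 ≠ 0) :
    ∃ r > 0, ∃ φ, x = (fun t => r * cos (t + φ)) ∧ y = (fun t => r * sin (t + φ)) := by
  obtain ⟨r, hr, φ, ha, hb⟩ := exists_pos_polar h0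
  refine ⟨r, hr, φ, funext fun t => ?_, funext fun t => ?_⟩
  · rw [(rotation_eq_cos_sin hx hy t).1, ha, hb, cos_add]; ring
  · rw [(rotation_eq_cos_sin hx hy t).2, ha, hb, sin_add]; ring

end Rotation

namespace Function.Periodic

variable {E : Type*} [NormedAddCommGroup E] [NormedSpace ℝ E] {g : ℝ → E} {T : ℝ}

theorem intervalIntegral_comp_add_right (hg : Periodic g T) (φ : ℝ) :
    ∫ s in (0 : ℝ)..T, g (s + φ) = ∫ s in (0 : ℝ)..T, g s := by
  rw [intervalIntegral.integral_comp_add_right, zero_add, add_comm T,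
    hg.intervalIntegral_add_eq φ 0, zero_add]

theorem sub_eq_intervalIntegral_of_hasDerivAt [CompleteSpace E] {f : ℝ → E} (hg : Periodic g T)
    (hgc : Continuous g) (hf : ∀ t, HasDerivAt f (g t) t) (t : ℝ) :
    f (t + T) - f t = ∫ s in (0 : ℝ)..T, g s := by
  rw [← intervalIntegral.integral_eq_sub_of_hasDerivAt (fun s _ => hf s)
    (hgc.intervalIntegrable _ _), hg.intervalIntegral_add_eq t 0, zero_add]

end Function.Periodic

theorem cylinders_periodic_general
    (h : ℝ × ℝ → ℝ) (hh : Continuous h)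
    (hmean : (∫ s in (0:ℝ)..(2 * π), h (Real.cos s, Real.sin s)) = 0)
    (H2 : ∀ r θ : ℝ, 0 < r →
      h (r * Real.cos θ, r * Real.sin θ) = h (Real.cos θ, Real.sin θ))
    (x y z : ℝ → ℝ) (x₀ y₀ : ℝ)
    (hx : ∀ t, HasDerivAt x (-(y t)) t)
    (hy : ∀ t, HasDerivAt y (x t) t)
    (hz : ∀ t, HasDerivAt z (h (x t, y t)) t)
    (hx0 : x 0 = x₀) (hy0 : y 0 = y₀)
    (hnz : x₀ ^ 2 + y₀ ^ 2 ≠ 0) :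
    ∀ t, x (t + 2 * π) = x t ∧ y (t + 2 * π) = y t ∧ z (t + 2 * π) = z t := by
  obtain ⟨r, hr, φ, rfl, rfl⟩ := rotation_eq_polar hx hy (by rwa [hx0, hy0])
  set H : ℝ → ℝ := fun s => h (cos s, sin s)
  have hH : Function.Periodic H (2 * π) := fun s => by
    simp only [H, cos_add_two_pi, sin_add_two_pi]
  have hHc : Continuous H := hh.comp (continuous_cos.prodMk continuous_sin)
  have hzH : ∀ t, HasDerivAt z (H (t + φ)) t := fun t => by simpa only [H2 r _ hr] using hz t
  intro t
  refine ⟨by simp only [add_right_comm t, cos_add_two_pi],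
    by simp only [add_right_comm t, sin_add_two_pi], ?_⟩
  have hshift := (hH.add_const φ).sub_eq_intervalIntegral_of_hasDerivAt
    (hHc.comp (continuous_add_const φ)) hzH t
  rw [hH.intervalIntegral_comp_add_right, hmean] at hshift
  exact sub_eq_zero.mp hshift

/-- under H1 (zero mean on the circle) and H2, every solution
off the z-axis is 2π-periodic. -/
theorem cylinders_periodic
    (h : ℝ × ℝ → ℝ) (hh : Continuous h)
    (hmean : (∫ s in (0:ℝ)..(2 * π), h (Real.cos s, Real.sin s)) = 0)
    (H2 : ∀ r θ : ℝ, 0 < r →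
      h (r * Real.cos θ, r * Real.sin θ) = h (Real.cos θ, Real.sin θ))
    (x y z : ℝ → ℝ) (x₀ y₀ z₀ : ℝ)
    (hx : ∀ t, HasDerivAt x (-(y t)) t)
    (hy : ∀ t, HasDerivAt y (x t) t)
    (hz : ∀ t, HasDerivAt z (h (x t, y t)) t)
    (hx0 : x 0 = x₀) (hy0 : y 0 = y₀) (hz0 : z 0 = z₀)
    (hnz : x₀ ^ 2 + y₀ ^ 2 ≠ 0) :
    ∀ t, x (t + 2 * π) = x t ∧ y (t + 2 * π) = y t ∧ z (t + 2 * π) = z t :=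
  cylinders_periodic_general h hh hmean H2 x y z x₀ y₀ hx hy hz hx0 hy0 hnz
end
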